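/- Let $r:\mathbb{N}^*\to(0,1]$ satisfy $K_r := \inf_{n\ge 1} n\,r(n) > 0$ and $\sup_{n\ge 1} n\,r(n) \le 1$, and let $\tilde r(n) := K_r/n$. Then for the processor-sharing map with rate $\tilde r$, the total workload evolves as a Lindley recursion with drain rate $K_r$: for any finite counting measure $\mu$, $s \ge 0$, $x \ge 0$, $\langle \Phi^{\tilde r}(\mu + \delta_s, x), I\rangle = \left[\langle \mu, I\rangle + s - K_r x\right]^+$, where $I$ is the identity function and $\langle\nu, I\rangle = \int t\,d\nu(t)$. -/

import Mathlib

open MeasureTheory Filter Topology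

/-- The partial integral order `≼` on finite positive measures. -/
def IntOrder (μ ν : Measure ℝ) : Prop :=
  ∀ f : ℝ → ℝ, Measurable f → Monotone f → (∀ x, 0 ≤ f x) → (∃ C, ∀ x, f x ≤ C) →
    ∫ x, f x ∂μ ≤ ∫ x, f x ∂ν

/-- The `i`-th smallest atom (1-based) of the finite counting measure represented by the
multiset `m`. -/
noncomputable def atom (m : Multiset ℝ) (i : ℕ) : ℝ :=
  (m.sort (· ≤ ·)).getD (i - 1) 0

/-- `γ_i^r(m, x)`. -/
noncomputable def gam (r : ℕ → ℝ) (m : Multiset ℝ) (x : ℝ) (i : ℕ) : ℝ :=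
  r (Multiset.card m - i + 1) *
    (x - ∑ j ∈ Finset.Icc 1 (i - 1),
      atom m j * (1 / r (Multiset.card m - j + 1) - 1 / r (Multiset.card m - j)))

open Classical in
/-- `i^r(m, x) = max {i ≤ N(m) : α_i(m) ≤ γ_i^r(m,x)}`, with `max ∅ = 0`. -/
noncomputable def irdx (r : ℕ → ℝ) (m : Multiset ℝ) (x : ℝ) : ℕ :=
  (((Finset.Icc 1 (Multiset.card m)).filter (fun i => atom m i ≤ gam r m x i)).max).unbotD 0

/-- `γ^r(m, x)`, the amount of attained service per customer by time `x`
(`0` for the empty profile). -/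
noncomputable def gammaStar (r : ℕ → ℝ) (m : Multiset ℝ) (x : ℝ) : ℝ :=
  if m = 0 then 0 else gam r m x (min (irdx r m x + 1) (Multiset.card m))

open Classical in
/-- The one-step processor-sharing map `Φ^r(·, x) = τ_{γ^r(·,x)}`. -/
noncomputable def PhiM (r : ℕ → ℝ) (m : Multiset ℝ) (x : ℝ) : Multiset ℝ :=
  (m.filter (fun a => gammaStar r m x < a)).map (fun a => a - gammaStar r m x)

/-- The counting measure associated to a multiset of atoms. -/
noncomputable def toMeas (m : Multiset ℝ) : Measure ℝ :=
  (m.map (fun a => (Measure.dirac a : Measure ℝ))).sum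

/-! For `r(n) = K / n` every increment `1 / r(n + 1) - 1 / r(n)` equals `1 / K`, so
`γ_{k+1}^r(μ, x) = (K x - S_k) / (N - k)` with `S_k` the sum of the `k` smallest atoms: the level
the other `N - k` jobs reach when the service `K x` is spent after the `k` smallest jobs are
completed (`waterLevel`). While the next atom lies below it this level does not decrease, so the
maximality of `i^r` puts the jobs of index `≤ i^r` below `γ^r` and the others above it. Hence
`Σ (a - γ^r)⁺` is either `0`, when every job is completed and `Σ a ≤ K x`, or
`Σ a - S_k - (N - k) γ^r = Σ a - K x ≥ 0`. -/

lemma toMeas_cons (a : ℝ) (m : Multiset ℝ) :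
    toMeas (a ::ₘ m) = Measure.dirac a + toMeas m := by
  simp [toMeas]

lemma integrable_toMeas (f : ℝ → ℝ) (m : Multiset ℝ) : Integrable f (toMeas m) := by
  induction m using Multiset.induction_on with
  | empty => simp [toMeas]
  | cons a m ih => rw [toMeas_cons]; exact (integrable_dirac (by simp)).add_measure ih

lemma integral_toMeas (f : ℝ → ℝ) (m : Multiset ℝ) :
    ∫ t, f t ∂(toMeas m) = (m.map f).sum := by
  induction m using Multiset.induction_on with
  | empty => simp [toMeas]
  | cons a m ih =>
    rw [toMeas_cons, integral_add_measure (integrable_dirac (by simp)) (integrable_toMeas f m),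
      integral_dirac, ih, Multiset.map_cons, Multiset.sum_cons]

lemma sum_map_sub_filter_lt (c : ℝ) (m : Multiset ℝ) [DecidablePred (c < ·)] :
    ((m.filter (c < ·)).map (· - c)).sum = (m.map fun a => max (a - c) 0).sum := by
  induction m using Multiset.induction_on with
  | empty => simp
  | cons a m ih =>
    by_cases h : c < a
    · simp [Multiset.filter_cons_of_pos _ h, ih, h.le]
    · simp [Multiset.filter_cons_of_neg _ h, ih, not_lt.1 h]

lemma List.sum_map_eq_sum_range_getD (f : ℝ → ℝ) :
    ∀ l : List ℝ, (l.map f).sum = ∑ i ∈ Finset.range l.length, f (l.getD i 0)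
  | [] => by simp
  | a :: l => by simp [sum_map_eq_sum_range_getD f l, Finset.sum_range_succ', add_comm]

lemma sum_map_eq_sum_atom (f : ℝ → ℝ) (m : Multiset ℝ) :
    (m.map f).sum = ∑ i ∈ Finset.range (Multiset.card m), f (atom m (i + 1)) := by
  conv_lhs => rw [← Multiset.sort_eq m (· ≤ ·)]
  rw [Multiset.map_coe, Multiset.sum_coe, List.sum_map_eq_sum_range_getD,
    Multiset.length_sort]
  rfl

lemma atom_succ_monotoneOn (m : Multiset ℝ) :
    MonotoneOn (fun i => atom m (i + 1)) (Set.Iio (Multiset.card m)) := by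
  intro i hi j hj hij
  rw [Set.mem_Iio, ← Multiset.length_sort (· ≤ ·)] at hi hj
  simp only [atom, add_tsub_cancel_right, List.getD_eq_getElem _ _ hi,
    List.getD_eq_getElem _ _ hj]
  exact (Multiset.pairwise_sort m _).rel_get_of_le (a := ⟨i, hi⟩) (b := ⟨j, hj⟩) hij

lemma Finset.le_max_unbotD {s : Finset ℕ} {i : ℕ} (hi : i ∈ s) : i ≤ s.max.unbotD 0 := by
  obtain ⟨b, hb⟩ := Finset.max_of_mem hi
  rw [hb]
  exact Finset.le_max_of_eq hi hb

lemma Finset.max_unbotD_mem {s : Finset ℕ} (h : s.max.unbotD 0 ≠ 0) : s.max.unbotD 0 ∈ s := by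
  rcases s.eq_empty_or_nonempty with rfl | hs
  · simp at h
  · obtain ⟨b, hb⟩ := Finset.max_of_nonempty hs
    rw [hb]
    exact Finset.mem_of_max hb

section irdx

variable (r : ℕ → ℝ) (m : Multiset ℝ) (x : ℝ)

lemma irdx_le_card : irdx r m x ≤ Multiset.card m := by
  by_cases h : irdx r m x = 0
  · simp [h]
  · exact (Finset.mem_Icc.1 (Finset.mem_filter.1 (Finset.max_unbotD_mem h)).1).2

lemma atom_irdx_le_gam (h : irdx r m x ≠ 0) : atom m (irdx r m x) ≤ gam r m x (irdx r m x) :=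
  (Finset.mem_filter.1 (Finset.max_unbotD_mem h)).2

lemma gam_lt_atom_of_irdx_lt {i : ℕ} (hi : i ∈ Finset.Icc 1 (Multiset.card m))
    (h : irdx r m x < i) : gam r m x i < atom m i := by
  by_contra! hle
  exact h.not_ge (Finset.le_max_unbotD (Finset.mem_filter.2 ⟨hi, hle⟩))

end irdx

open Finset in
noncomputable def waterLevel (a : ℕ → ℝ) (N : ℕ) (c : ℝ) (k : ℕ) : ℝ :=
  (c - ∑ j ∈ range k, a j) / (N - k : ℕ)

section waterLevel

open Finset

variable {a : ℕ → ℝ} {N k : ℕ} {c : ℝ}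

lemma waterLevel_mul (hk : k < N) :
    (N - k : ℕ) * waterLevel a N c k = c - ∑ j ∈ range k, a j := by
  have : ((N - k : ℕ) : ℝ) ≠ 0 := by norm_cast; omega
  rw [waterLevel, mul_div_cancel₀ _ this]

lemma waterLevel_le_succ (hk : k + 1 < N) (h : a k ≤ waterLevel a N c k) :
    waterLevel a N c k ≤ waterLevel a N c (k + 1) := by
  have hpos : (0 : ℝ) < (N - (k + 1) : ℕ) := by norm_cast; omega
  have hcast : ((N - k : ℕ) : ℝ) = (N - (k + 1) : ℕ) + 1 := by norm_cast; omega
  have h0 := waterLevel_mul (a := a) (c := c) (show k < N by omega)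
  have h1 := waterLevel_mul (a := a) (c := c) hk
  rw [sum_range_succ] at h1
  rw [hcast] at h0
  nlinarith

lemma sum_max_sub_waterLevel_of_lt (hmono : MonotoneOn a (Set.Iio N)) (hk : k < N)
    (hserved : k ≠ 0 → a (k - 1) ≤ waterLevel a N c (k - 1))
    (hwaiting : waterLevel a N c k < a k) :
    ∑ i ∈ range N, max (a i - waterLevel a N c k) 0 = ∑ i ∈ range N, a i - c := by
  set γ := waterLevel a N c k
  have hlow : ∀ i < k, a i ≤ γ := fun i hi =>
    calc a i ≤ a (k - 1) := hmono (show i < N by omega) (show k - 1 < N by omega) (by omega)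
      _ ≤ waterLevel a N c (k - 1) := hserved (by omega)
      _ ≤ γ := by
        have := waterLevel_le_succ (a := a) (c := c) (show k - 1 + 1 < N by omega)
          (hserved (by omega))
        rwa [Nat.sub_add_cancel (by omega)] at this
  have hhigh : ∀ i ∈ Ico k N, γ ≤ a i := fun i hi =>
    hwaiting.le.trans (hmono hk (mem_Ico.1 hi).2 (mem_Ico.1 hi).1)
  rw [← sum_range_add_sum_Ico _ hk.le, ← sum_range_add_sum_Ico _ hk.le,
    sum_eq_zero fun i hi => max_eq_right (sub_nonpos.2 (hlow i (mem_range.1 hi))),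
    sum_congr rfl fun i hi => max_eq_left (sub_nonneg.2 (hhigh i hi)),
    sum_sub_distrib, sum_const, Nat.card_Ico, nsmul_eq_mul, waterLevel_mul hk]
  ring

lemma sum_max_sub_waterLevel_of_eq (hmono : MonotoneOn a (Set.Iio N)) (hN : N ≠ 0)
    (hlast : a (N - 1) ≤ waterLevel a N c (N - 1)) :
    ∑ i ∈ range N, max (a i - waterLevel a N c (N - 1)) 0 = 0 ∧
      ∑ i ∈ range N, a i ≤ c := by
  have hγ : waterLevel a N c (N - 1) = c - ∑ j ∈ range (N - 1), a j := by
    simpa [show N - (N - 1) = 1 by omega] using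
      waterLevel_mul (a := a) (c := c) (show N - 1 < N by omega)
  refine ⟨sum_eq_zero fun i hi => max_eq_right (sub_nonpos.2 ?_), ?_⟩
  · have hi : i < N := mem_range.1 hi
    exact (hmono hi (show N - 1 < N by omega) (by omega)).trans hlast
  · rw [← Nat.sub_add_cancel (Nat.one_le_iff_ne_zero.2 hN), sum_range_succ]
    linarith

theorem sum_max_sub_waterLevel (hmono : MonotoneOn a (Set.Iio N)) (hN : N ≠ 0)
    (hkN : k ≤ N) (hserved : k ≠ 0 → a (k - 1) ≤ waterLevel a N c (k - 1))
    (hwaiting : k < N → waterLevel a N c k < a k) :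
    ∑ i ∈ range N, max (a i - waterLevel a N c (min k (N - 1))) 0 =
      max (∑ i ∈ range N, a i - c) 0 := by
  rcases hkN.lt_or_eq with hk | rfl
  · have h := sum_max_sub_waterLevel_of_lt hmono hk hserved (hwaiting hk)
    rw [min_eq_left (by omega), h, max_eq_left (h ▸ sum_nonneg fun i _ => le_max_right _ _)]
  · obtain ⟨hzero, hle⟩ := sum_max_sub_waterLevel_of_eq hmono hN (hserved hN)
    rw [min_eq_right (by omega), hzero, max_eq_right (by linarith)]

end waterLevel

lemma gam_div_card_succ {K : ℝ} (hK : K ≠ 0) (m : Multiset ℝ) (x : ℝ) {k : ℕ}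
    (hk : k < Multiset.card m) :
    gam (fun n => K / n) m x (k + 1) =
      waterLevel (fun j => atom m (j + 1)) (Multiset.card m) (K * x) k := by
  have hrate : ∀ n : ℕ, 1 / (K / ((n + 1 : ℕ) : ℝ)) - 1 / (K / (n : ℝ)) = 1 / K := by
    intro n; push_cast; field_simp; ring
  have hsum : ∑ j ∈ Finset.Icc 1 k, atom m j = ∑ j ∈ Finset.range k, atom m (j + 1) := by
    rw [← Finset.Ico_add_one_right_eq_Icc, Finset.sum_Ico_eq_sum_range, Nat.add_sub_cancel]
    simp only [add_comm]
  have hN : ((Multiset.card m - (k + 1) + 1 : ℕ) : ℝ) = (Multiset.card m - k : ℕ) := by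
    congr 1; omega
  have hN0 : ((Multiset.card m - k : ℕ) : ℝ) ≠ 0 := by norm_cast; omega
  simp only [gam, waterLevel, hrate, Nat.add_sub_cancel, ← Finset.sum_mul, hsum, hN]
  field_simp

lemma gammaStar_div_card {K : ℝ} (hK : K ≠ 0) {m : Multiset ℝ} (hm : m ≠ 0) (x : ℝ) :
    gammaStar (fun n => K / n) m x =
      waterLevel (fun j => atom m (j + 1)) (Multiset.card m) (K * x)
        (min (irdx (fun n => K / n) m x) (Multiset.card m - 1)) := by
  have hN : Multiset.card m ≠ 0 := by simpa using hm
  rw [gammaStar, if_neg hm, ← gam_div_card_succ hK m x (by omega)]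
  congr 1
  omega

theorem stmt16_general (K : ℝ) (hK : 0 < K)
    (m : Multiset ℝ) (s x : ℝ) :
    ∫ t, t ∂(toMeas (PhiM (fun n => K / n) (s ::ₘ m) x)) =
      max ((∫ t, t ∂(toMeas m)) + s - K * x) 0 := by
  set M := s ::ₘ m
  set k := irdx (fun n => K / n) M x
  have hN : Multiset.card M ≠ 0 := by simp [M]
  have hworkload :
      (∫ t, t ∂(toMeas m)) + s = ∑ i ∈ Finset.range (Multiset.card M), atom M (i + 1) := by
    rw [integral_toMeas, Multiset.map_id', add_comm]
    simpa [M] using sum_map_eq_sum_atom id M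
  have hserved : k ≠ 0 → atom M (k - 1 + 1) ≤
      waterLevel (fun j => atom M (j + 1)) (Multiset.card M) (K * x) (k - 1) := fun hk => by
    rw [← gam_div_card_succ hK.ne' M x (by have := irdx_le_card (fun n => K / n) M x; omega),
      Nat.sub_add_cancel (Nat.one_le_iff_ne_zero.2 hk)]
    exact atom_irdx_le_gam _ M x hk
  have hwaiting : k < Multiset.card M →
      waterLevel (fun j => atom M (j + 1)) (Multiset.card M) (K * x) k < atom M (k + 1) :=
    fun hk => by
    rw [← gam_div_card_succ hK.ne' M x hk]
    exact gam_lt_atom_of_irdx_lt _ M x (Finset.mem_Icc.2 ⟨by omega, hk⟩) (by omega)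
  rw [integral_toMeas, Multiset.map_id', PhiM, sum_map_sub_filter_lt, sum_map_eq_sum_atom,
    hworkload, gammaStar_div_card hK.ne' Multiset.cons_ne_zero x]
  exact sum_max_sub_waterLevel (atom_succ_monotoneOn M) hN (irdx_le_card _ M x) hserved hwaiting

/-- Under the rate function `r̃(n) = K_r / n` (constant throughput `K_r`), the workload
evolves as a Lindley recursion with drain rate `K_r`:
`⟨Φ^{r̃}(μ + δ_s, x), I⟩ = [⟨μ, I⟩ + s - K_r x]⁺`. -/
theorem stmt16 (K : ℝ) (hK : 0 < K) (hK1 : K ≤ 1)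
    (m : Multiset ℝ) (hm : ∀ a ∈ m, (0:ℝ) ≤ a)
    (s x : ℝ) (hs : 0 ≤ s) (hx : 0 ≤ x) :
    ∫ t, t ∂(toMeas (PhiM (fun n => K / n) (s ::ₘ m) x)) =
      max ((∫ t, t ∂(toMeas m)) + s - K * x) 0 :=
  stmt16_general K hK m s x
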